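/- arXiv:2305.15790 — 2 statements merged into one kernel-verified Lean document; each statement's English description precedes it below -/
import Mathlib

section
/- In a complete weighted graph with nonnegative edge weights, the weight of any Hamiltonian path obtained by removing an edge from a maximum-weight Hamiltonian cycle is at most the maximum weight over all Hamiltonian paths; consequently, removing the minimum-weight edge from a maximum-weight Hamiltonian cycle yields a Hamiltonian path of weight at least half the maximum Hamiltonian path weight. -/
/-- The list of consecutive edges of a path given as a list of vertices. -/
def pathEdges {V : Type*} (l : List V) : List (V × V) := l.zip l.tail

/-- The total weight of a list of edges. -/
def edgesWeight {V : Type*} (w : V → V → ℝ) (E : List (V × V)) : ℝ :=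
  (E.map fun p => w p.1 p.2).sum

/-- The total weight of a path given as a list of vertices. -/
def pathWeight {V : Type*} (w : V → V → ℝ) (l : List V) : ℝ :=
  edgesWeight w (pathEdges l)

/-- The edges of a cycle given as a list of vertices (consecutive edges plus the closing edge). -/
def cycleEdges {V : Type*} (l : List V) : List (V × V) := pathEdges (l ++ l.take 1)

/-- The total weight of a cycle given as a list of vertices. -/
def cycleWeight {V : Type*} (w : V → V → ℝ) (l : List V) : ℝ :=
  edgesWeight w (cycleEdges l)

/-- A list of vertices is Hamiltonian (a listing of all vertices, each exactly once). -/
def IsHamList {V : Type*} [Fintype V] (l : List V) : Prop := l.Nodup ∧ ∀ v : V, v ∈ l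

/-- A list of edges is a matching: all the endpoint vertices are pairwise distinct. -/
def IsMatchingList {V : Type*} (E : List (V × V)) : Prop :=
  ((E.map Prod.fst) ++ (E.map Prod.snd)).Nodup

lemma pathEdges_prefix' {V : Type*} : ∀ (l m : List V), pathEdges l <+: pathEdges (l ++ m)
  | [], m => by simp [pathEdges]
  | [a], m => by simp [pathEdges]
  | a :: b :: l, m => by
      obtain ⟨t, ht⟩ := pathEdges_prefix' (b :: l) m
      exact ⟨t, by simp [pathEdges] at ht ⊢; exact ht⟩

lemma edgesWeight_nonneg' {V : Type*} (w : V → V → ℝ) (hw : ∀ u v, 0 ≤ w u v)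
    (E : List (V × V)) : 0 ≤ edgesWeight w E := by
  apply List.sum_nonneg
  intro x hx
  obtain ⟨e, _, rfl⟩ := List.mem_map.mp hx
  exact hw _ _

lemma pathWeight_le_cycleWeight' {V : Type*} (w : V → V → ℝ) (hw : ∀ u v, 0 ≤ w u v)
    (l : List V) : pathWeight w l ≤ cycleWeight w l := by
  obtain ⟨t, ht⟩ := pathEdges_prefix' l (l.take 1)
  unfold pathWeight cycleWeight cycleEdges
  rw [← ht]
  unfold edgesWeight
  rw [List.map_append, List.sum_append]
  have := edgesWeight_nonneg' w hw t
  unfold edgesWeight at this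
  linarith

lemma sum_map_sub' {α : Type*} (E : List α) (f : α → ℝ) (W : ℝ) :
    (E.map (fun e => W - f e)).sum = E.length * W - (E.map f).sum := by
  induction E with
  | nil => simp
  | cons a E ih => simp [ih]; ring

/-- Any Hamiltonian path obtained by removing an edge from a maximum-weight Hamiltonian cycle
(i.e. any rotation of the cycle, read as a path) has weight at most the maximum Hamiltonian path
weight; and removing the minimum-weight edge (a rotation whose weight is at least the cycle
weight minus each edge weight) yields a Hamiltonian path of weight at least half the maximum
Hamiltonian path weight. -/
theorem stmt_5 {V : Type*} [Fintype V] [DecidableEq V]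
    (hn : 3 ≤ Fintype.card V)
    (w : V → V → ℝ) (hsymm : ∀ u v, w u v = w v u) (hw : ∀ u v, 0 ≤ w u v)
    (c : List V) (hc : IsHamList c)
    (hcmax : ∀ c', IsHamList c' → cycleWeight w c' ≤ cycleWeight w c)
    (p : List V) (hp : IsHamList p)
    (hpmax : ∀ q, IsHamList q → pathWeight w q ≤ pathWeight w p) :
    (∀ k : ℕ, pathWeight w (c.rotate k) ≤ pathWeight w p) ∧
    (∀ k : ℕ, (∀ e ∈ cycleEdges c, cycleWeight w c - w e.1 e.2 ≤ pathWeight w (c.rotate k)) →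
      pathWeight w p / 2 ≤ pathWeight w (c.rotate k)) := by
  have hrot : ∀ k : ℕ, IsHamList (c.rotate k) := by
    intro k
    exact ⟨(List.nodup_rotate).mpr hc.1, fun v => (List.mem_rotate).mpr (hc.2 v)⟩
  have part1 : ∀ k : ℕ, pathWeight w (c.rotate k) ≤ pathWeight w p :=
    fun k => hpmax _ (hrot k)
  refine ⟨part1, ?_⟩
  intro k hk
  set X := pathWeight w (c.rotate k) with hX
  set W := cycleWeight w c with hW
  -- c is nonempty
  have hcard : c.length = Fintype.card V := by
    have h1 : c.toFinset = Finset.univ := Finset.eq_univ_iff_forall.mpr (by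
      intro v; simpa using hc.2 v)
    have h2 := List.toFinset_card_of_nodup hc.1
    rw [h1, Finset.card_univ] at h2
    omega
  have hclen : 3 ≤ c.length := hcard ▸ hn
  have hcne : c ≠ [] := by
    intro h; rw [h] at hclen; simp at hclen
  -- length of cycleEdges c
  have hlen : (cycleEdges c).length = c.length := by
    unfold cycleEdges pathEdges
    rw [List.length_zip]
    rcases c with _ | ⟨a, t⟩
    · simp at hcne
    · simp [List.take]
  -- W nonneg
  have hWpos : 0 ≤ W := edgesWeight_nonneg' w hw _
  -- p's weight is at most W
  have hpW : pathWeight w p ≤ W := by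
    calc pathWeight w p ≤ cycleWeight w p := pathWeight_le_cycleWeight' w hw p
    _ ≤ W := hcmax p hp
  -- sum the hypothesis over all edges of the cycle
  have hsum : ((cycleEdges c).map (fun e => W - w e.1 e.2)).sum ≤
      ((cycleEdges c).map (fun _ => X)).sum :=
    List.sum_le_sum (fun e he => hk e he)
  rw [sum_map_sub'] at hsum
  have hconst : ((cycleEdges c).map (fun _ : V × V => X)).sum = (cycleEdges c).length * X := by
    rw [List.map_const', List.sum_replicate, nsmul_eq_mul]
  rw [hconst, hlen] at hsum
  have hWeq : ((cycleEdges c).map (fun e => w e.1 e.2)).sum = W := rfl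
  rw [hWeq] at hsum
  -- now hsum : c.length * W - W ≤ c.length * X
  have hn3 : (3 : ℝ) ≤ (c.length : ℝ) := by exact_mod_cast hclen
  have hnpos : (0 : ℝ) < (c.length : ℝ) := by linarith
  nlinarith [mul_le_mul_of_nonneg_left hpW (le_of_lt hnpos)]
end

section
/- Removing the minimum-weight edge from each cycle of a cycle cover whose cycles all have length at least 2 and whose edges have nonnegative weights, and then concatenating the resulting paths in any order (joining them with additional edges of nonnegative weight), yields a Hamiltonian path whose weight is at least half the weight of the cycle cover. -/
/-- The weight of a cycle in a cycle cover: a 2-cycle consists of the two parallel traversals of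
a single edge, whose weight is counted once. -/
def coverCycleWeight {V : Type*} (w : V → V → ℝ) (c : List V) : ℝ :=
  if c.length = 2 then pathWeight w c else cycleWeight w c

/-- A cycle cover: a list of vertex-disjoint cycles (each of length at least 2) covering all
vertices. -/
def IsCycleCover {V : Type*} [Fintype V] (CC : List (List V)) : Prop :=
  CC.flatten.Nodup ∧ (∀ v : V, v ∈ CC.flatten) ∧ ∀ c ∈ CC, 2 ≤ c.length

section aux
variable {V : Type*} (w : V → V → ℝ)

lemma pathWeight_nonneg (hw : ∀ u v, 0 ≤ w u v) (l : List V) : 0 ≤ pathWeight w l := by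
  apply List.sum_nonneg
  intro x hx
  simp only [List.mem_map] at hx
  obtain ⟨p, -, rfl⟩ := hx
  exact hw _ _

lemma pathWeight_cons_cons (a b : V) (l : List V) :
    pathWeight w (a :: b :: l) = w a b + pathWeight w (b :: l) := by
  simp [pathWeight, pathEdges, edgesWeight]

lemma pathWeight_append_le (hw : ∀ u v, 0 ≤ w u v) :
    ∀ l1 l2 : List V, pathWeight w l1 + pathWeight w l2 ≤ pathWeight w (l1 ++ l2) := by
  intro l1
  induction l1 with
  | nil => intro l2; simp [pathWeight, pathEdges, edgesWeight]
  | cons a l1 ih =>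
    intro l2
    cases l1 with
    | nil =>
      cases l2 with
      | nil => simp [pathWeight, pathEdges, edgesWeight]
      | cons b l2 =>
        have h1 : pathWeight w [a] = 0 := by simp [pathWeight, pathEdges, edgesWeight]
        have h2 := pathWeight_cons_cons w a b l2
        have := hw a b
        simp only [List.singleton_append]
        linarith
    | cons b l1 =>
      have h2 := pathWeight_cons_cons w a b (l1 ++ l2)
      have h3 := pathWeight_cons_cons w a b l1
      have := ih (l2 := l2)
      simp only [List.cons_append] at *
      linarith

lemma flatten_pathWeight_le (hw : ∀ u v, 0 ≤ w u v) :
    ∀ L : List (List V), (L.map (pathWeight w)).sum ≤ pathWeight w L.flatten := by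
  intro L
  induction L with
  | nil => simp [pathWeight, pathEdges, edgesWeight]
  | cons a L ih =>
    simp only [List.map_cons, List.sum_cons, List.flatten_cons]
    have := pathWeight_append_le w hw a L.flatten
    linarith

lemma perm_flatten' {α : Type*} {l₁ l₂ : List (List α)} (h : l₁.Perm l₂) :
    l₁.flatten.Perm l₂.flatten := by
  induction h with
  | nil => rfl
  | cons a _ ih => simpa using ih.append_left a
  | swap a b l =>
    simp only [List.flatten_cons, ← List.append_assoc]
    exact (List.perm_append_comm).append_right _
  | trans _ _ ih1 ih2 => exact ih1.trans ih2

lemma sum_half_le {α : Type*} (f g : α → ℝ) :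
    ∀ l : List α, (∀ x ∈ l, f x / 2 ≤ g x) → (l.map f).sum / 2 ≤ (l.map g).sum := by
  intro l
  induction l with
  | nil => simp
  | cons a l ih =>
    intro h
    have h1 := h a (by simp)
    have h2 := ih fun x hx => h x (by simp [hx])
    simp only [List.map_cons, List.sum_cons]
    linarith

end aux


/-- Removing the minimum-weight edge from each cycle of a cycle cover (all cycles of length at
least 2, nonnegative weights), and then concatenating the resulting paths in any order (joining
them with additional edges of nonnegative weight), yields a Hamiltonian path whose weight is at
least half the weight of the cycle cover.  Here `r c` is the path obtained from the cycle `c`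
(a rotation of `c`) whose weight witnesses the removal of a minimum-weight edge. -/
theorem stmt_9 {V : Type*} [Fintype V] [DecidableEq V]
    (w : V → V → ℝ) (hsymm : ∀ u v, w u v = w v u) (hw : ∀ u v, 0 ≤ w u v)
    (CC : List (List V)) (hCC : IsCycleCover CC)
    (r : List V → List V) (hrot : ∀ c ∈ CC, ∃ k : ℕ, r c = c.rotate k)
    (hmin : ∀ c ∈ CC, ∀ e ∈ cycleEdges c,
      coverCycleWeight w c - w e.1 e.2 ≤ pathWeight w (r c))
    (L : List (List V)) (hL : L.Perm (CC.map r)) :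
    IsHamList L.flatten ∧
    (CC.map (coverCycleWeight w)).sum / 2 ≤ pathWeight w L.flatten := by
  obtain ⟨hnd, hmem, hlen⟩ := hCC
  -- flatten permutation
  have hf2 : List.Forall₂ (fun x y => List.Perm x y) (CC.map r) CC := by
    have : ∀ l : List (List V), (∀ c ∈ l, (r c).Perm c) → List.Forall₂ (fun x y => List.Perm x y) (l.map r) l := by
      intro l
      induction l with
      | nil => intro _; exact .nil
      | cons a l ih =>
        intro h
        exact .cons (h a (by simp)) (ih fun c hc => h c (by simp [hc]))
    apply this
    intro c hc
    obtain ⟨k, hk⟩ := hrot c hc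
    rw [hk]; exact List.rotate_perm c k
  have hflat : L.flatten.Perm CC.flatten :=
    (perm_flatten' hL).trans (List.Perm.flatten_congr hf2)
  refine ⟨⟨hflat.nodup_iff.mpr hnd, fun v => hflat.mem_iff.mpr (hmem v)⟩, ?_⟩
  -- per-cycle bound
  have key : ∀ c ∈ CC, coverCycleWeight w c / 2 ≤ pathWeight w (r c) := by
    intro c hc
    by_cases h2 : c.length = 2
    · -- c = [a, b]
      obtain ⟨a, b, rfl⟩ : ∃ a b, c = [a, b] := by
        match c, h2 with
        | [a, b], _ => exact ⟨a, b, rfl⟩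
      obtain ⟨k, hk⟩ := hrot _ hc
      have hcov : coverCycleWeight w [a, b] = w a b := by
        simp [coverCycleWeight, pathWeight, pathEdges, edgesWeight]
      have hpw : pathWeight w (r [a, b]) = w a b := by
        rw [hk, ← List.rotate_mod]
        have : k % [a, b].length = 0 ∨ k % [a, b].length = 1 := by
          simp only [List.length_cons, List.length_nil]; omega
        rcases this with h | h <;> rw [h]
        · simp [pathWeight, pathEdges, edgesWeight]
        · have : [a, b].rotate 1 = [b, a] := by
            rw [List.rotate_cons_succ]; simp
          rw [this]
          simp [pathWeight, pathEdges, edgesWeight, hsymm a b]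
      rw [hcov, hpw]
      have := hw a b
      linarith
    · -- length ≥ 3
      have h3 : 3 ≤ c.length := by have := hlen c hc; omega
      obtain ⟨a, b, d, rest, rfl⟩ : ∃ a b d rest, c = a :: b :: d :: rest := by
        match c, h3 with
        | a :: b :: d :: rest, _ => exact ⟨a, b, d, rest, rfl⟩
      have hce : cycleEdges (a :: b :: d :: rest)
          = (a, b) :: (b, d) :: pathEdges (d :: (rest ++ [a])) := by
        simp [cycleEdges, pathEdges]
      have hcw : cycleWeight w (a :: b :: d :: rest)
          = w a b + w b d + pathWeight w (d :: (rest ++ [a])) := by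
        rw [cycleWeight, hce]
        simp [edgesWeight, pathWeight]
        ring
      have hcov : coverCycleWeight w (a :: b :: d :: rest)
          = cycleWeight w (a :: b :: d :: rest) := by
        simp [coverCycleWeight, h2]
      have hrest := pathWeight_nonneg w hw (d :: (rest ++ [a]))
      rcases le_total (w a b) (w b d) with hle | hle
      · have := hmin _ hc (a, b) (by rw [hce]; simp)
        simp only at this
        rw [hcov, hcw]
        rw [hcov, hcw] at this
        linarith
      · have := hmin _ hc (b, d) (by rw [hce]; simp)
        simp only at this
        rw [hcov, hcw]
        rw [hcov, hcw] at this
        linarith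
  have h2 : (CC.map (coverCycleWeight w)).sum / 2
      ≤ (CC.map fun c => pathWeight w (r c)).sum :=
    sum_half_le _ _ CC key
  have h3 : (CC.map fun c => pathWeight w (r c)).sum = (L.map (pathWeight w)).sum := by
    have := (hL.map (pathWeight w)).sum_eq
    rw [this, List.map_map]
    rfl
  have h4 := flatten_pathWeight_le w hw L
  linarith
end
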